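/- Let n ≥ 2 and define f : ℂ^n → ℂ by f(z) = z₂ · conj(z₁). Then: (a) for every complex affine line L through the origin with L ∩ 𝔹^n ≠ ∅, the restriction of f to L ∩ ∂𝔹^n extends holomorphically along L (indeed, for every v with |v| = 1, the function ζ ↦ f(ζ v) is constant on the unit circle |ζ| = 1); but (b) there is no function F continuous on the closed unit ball, holomorphic on 𝔹^n, with F = f on ∂𝔹^n. Hence the complex lines through a single interior point of the ball do not form a testing family for holomorphic extendibility. -/

import Mathlib

/-!
On a complex line through the origin, `f(ζ v) = |ζ|² f(v)`, so `f` is constant on every circle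
`L ∩ ∂𝔹ⁿ` and trivially extends along `L`. A holomorphic extension `F` to the ball, however,
would make `ζ ↦ F(ζ v)` holomorphic on the disc with constant boundary value `f(v)`, so the
maximum principle forces `F(0) = f(v)` for every unit vector `v`; but `f` is not constant on
the sphere (it vanishes at `e₁` and equals `12/25` at `(3/5, 4/5, 0, …)`).
-/

open Complex Metric Set

/-- The function `f(z) = z₂ · conj(z₁)` on `ℂⁿ` (`n ≥ 2`). -/
noncomputable def counterexampleFun (n : ℕ) (hn : 2 ≤ n)
    (z : EuclideanSpace ℂ (Fin n)) : ℂ :=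
  z ⟨1, by omega⟩ * (starRingEnd ℂ) (z ⟨0, by omega⟩)

theorem Complex.apply_zero_eq_of_forall_smul_mem_sphere {E F : Type*}
    [NormedAddCommGroup E] [NormedSpace ℂ E] [NormedAddCommGroup F] [NormedSpace ℂ F]
    {Φ : E → F} (hc : ContinuousOn Φ (closedBall 0 1)) (hd : DifferentiableOn ℂ Φ (ball 0 1))
    {v : E} (hv : ‖v‖ ≤ 1) {c : F} (hΦ : ∀ ζ ∈ sphere (0 : ℂ) 1, Φ (ζ • v) = c) :
    Φ 0 = c := by
  have hmaps : MapsTo (fun ζ : ℂ => ζ • v) (ball 0 1) (ball 0 1) := fun ζ hζ => by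
    rw [mem_ball_zero_iff] at hζ ⊢
    calc ‖ζ • v‖ = ‖ζ‖ * ‖v‖ := norm_smul ζ v
      _ ≤ ‖ζ‖ := mul_le_of_le_one_right (norm_nonneg ζ) hv
      _ < 1 := hζ
  have hline : DiffContOnCl ℂ (Φ ∘ fun ζ : ℂ => ζ • v) (ball 0 1) :=
    (DiffContOnCl.mk_ball hd hc).comp (differentiable_id.smul_const v).diffContOnCl hmaps
  have := eqOn_closure_of_eqOn_frontier isBounded_ball hline diffContOnCl_const
    (fun ζ hζ => hΦ ζ (frontier_ball_subset_sphere hζ)) (subset_closure (mem_ball_self one_pos))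
  simpa using this

section counterexample

variable {n : ℕ} (hn : 2 ≤ n)

theorem counterexampleFun_smul (ζ : ℂ) (z : EuclideanSpace ℂ (Fin n)) :
    counterexampleFun n hn (ζ • z) = normSq ζ * counterexampleFun n hn z := by
  simp only [counterexampleFun, PiLp.smul_apply, smul_eq_mul, map_mul, ← mul_conj]
  ring

theorem counterexampleFun_smul_of_mem_sphere {ζ : ℂ} (hζ : ζ ∈ sphere (0 : ℂ) 1)
    (z : EuclideanSpace ℂ (Fin n)) : counterexampleFun n hn (ζ • z) = counterexampleFun n hn z := by
  rw [counterexampleFun_smul, normSq_eq_norm_sq, mem_sphere_zero_iff_norm.mp hζ]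
  simp

theorem counterexampleFun_single_zero :
    counterexampleFun n hn (EuclideanSpace.single ⟨0, by omega⟩ 1) = 0 := by
  simp [counterexampleFun, Fin.ext_iff]

theorem exists_norm_eq_one_counterexampleFun_ne_zero :
    ∃ v : EuclideanSpace ℂ (Fin n), ‖v‖ = 1 ∧ counterexampleFun n hn v ≠ 0 := by
  set i₀ : Fin n := ⟨0, by omega⟩
  set i₁ : Fin n := ⟨1, by omega⟩
  have hne : i₀ ≠ i₁ := by simp [i₀, i₁, Fin.ext_iff]
  -- a 3-4-5 right triangle gives a unit vector with rational entries
  refine ⟨EuclideanSpace.single i₀ (3 / 5) + EuclideanSpace.single i₁ (4 / 5), ?_, ?_⟩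
  · have h := norm_add_sq_eq_norm_sq_add_norm_sq_of_inner_eq_zero (𝕜 := ℂ)
      (EuclideanSpace.single i₀ (3 / 5 : ℂ)) (EuclideanSpace.single i₁ (4 / 5))
      (by simp [EuclideanSpace.inner_single_left, hne.symm])
    norm_num [PiLp.norm_single] at h
    exact (mul_self_inj (norm_nonneg _) zero_le_one).mp (h.trans (one_mul 1).symm)
  · simp [counterexampleFun, i₀, i₁, Fin.ext_iff]

end counterexample

/-- **The lines through one interior point do not test holomorphic extendibility.**
The function `f(z) = z₂ conj(z₁)` is constant on the intersection of the unit sphere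
with every complex line through the origin, hence extends holomorphically along each
such line, yet it admits no holomorphic extension to the ball. -/
theorem lines_through_one_point_not_testing
    {n : ℕ} (hn : 2 ≤ n) :
    -- (a) f is constant on every circle L ∩ ∂𝔹ⁿ, L a complex line through 0 ...
    (∀ v : EuclideanSpace ℂ (Fin n), ‖v‖ = 1 →
      ∃ c : ℂ, ∀ ζ ∈ sphere (0 : ℂ) 1, counterexampleFun n hn (ζ • v) = c) ∧
    -- ... and hence extends holomorphically along every such line ...
    (∀ v : EuclideanSpace ℂ (Fin n), ‖v‖ = 1 →
      ∃ g : ℂ → ℂ, ContinuousOn g (closedBall 0 1) ∧ DifferentiableOn ℂ g (ball 0 1) ∧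
        ∀ ζ ∈ sphere (0 : ℂ) 1, g ζ = counterexampleFun n hn (ζ • v)) ∧
    -- (b) ... but f has no holomorphic extension to the ball.
    ¬ ∃ F : EuclideanSpace ℂ (Fin n) → ℂ,
        ContinuousOn F (closedBall (0 : EuclideanSpace ℂ (Fin n)) 1) ∧
        DifferentiableOn ℂ F (ball (0 : EuclideanSpace ℂ (Fin n)) 1) ∧
        ∀ z ∈ sphere (0 : EuclideanSpace ℂ (Fin n)) 1, F z = counterexampleFun n hn z := by
  refine ⟨fun v _ => ⟨_, fun ζ hζ => counterexampleFun_smul_of_mem_sphere hn hζ v⟩,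
    fun v _ => ⟨fun _ => counterexampleFun n hn v, continuousOn_const, differentiableOn_const _,
      fun ζ hζ => (counterexampleFun_smul_of_mem_sphere hn hζ v).symm⟩, ?_⟩
  rintro ⟨F, hFc, hFd, hFf⟩
  have hF₀ : ∀ v : EuclideanSpace ℂ (Fin n), ‖v‖ = 1 → F 0 = counterexampleFun n hn v :=
    fun v hv => apply_zero_eq_of_forall_smul_mem_sphere hFc hFd hv.le fun ζ hζ => by
      have hζv : ζ • v ∈ sphere (0 : EuclideanSpace ℂ (Fin n)) 1 := by
        rw [mem_sphere_zero_iff_norm, norm_smul, hv, mem_sphere_zero_iff_norm.mp hζ, one_mul]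
      rw [hFf _ hζv, counterexampleFun_smul_of_mem_sphere hn hζ]
  obtain ⟨v, hv, hfv⟩ := exists_norm_eq_one_counterexampleFun_ne_zero hn
  refine hfv ?_
  calc counterexampleFun n hn v = F 0 := (hF₀ v hv).symm
    _ = counterexampleFun n hn (EuclideanSpace.single ⟨0, by omega⟩ 1) :=
      hF₀ _ (by simp [PiLp.norm_single])
    _ = 0 := counterexampleFun_single_zero hn
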